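/- For positive integers r, n, k, the r-Ramanujan sum satisfies c_r(n,k) = Σ_{d | gcd*(n,k)} d^r μ(k/d), where the sum is over divisors d of k with d^r | n and μ is the Möbius function. Equivalently, c_r(n,k) is an integer. -/

import Mathlib

/-!
Write each `m ∈ [1, k^r]` as `m = f^r m'`, where `f` is the largest divisor of `k` with `f^r ∣ m`.
Then `m' ∈ [1, (k/f)^r]`, `(m', (k/f)^r)_r = 1` and `mn/k^r = m'n/(k/f)^r`, and the decomposition
is unique because the divisors `d ∣ k` with `d^r ∣ m` are closed under `lcm`. Hence
`Σ_{e ∣ k} c_r(n, e)` is the full sum of the `k^r`-th roots of unity `e^{2πimn/k^r}`, which is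
`k^r` if `k^r ∣ n` and `0` otherwise, and Möbius inversion gives the formula.
-/

open Finset

/-- Cohen's `r`-Ramanujan sum. -/
noncomputable def ramcr (r n k : ℕ) : ℂ :=
  ∑ m ∈ (Finset.Icc 1 (k ^ r)).filter
      (fun m => ∀ d ∈ Finset.Icc 2 (k ^ r), ¬(d ^ r ∣ m ∧ d ^ r ∣ k ^ r)),
    Complex.exp (2 * Real.pi * Complex.I * m * n / (k ^ r))

/-- Cohen's condition `(m, k^r)_r = 1`. -/
def RCoprime (r m k : ℕ) : Prop := ∀ d, d ∣ k → d ^ r ∣ m → d = 1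

lemma rCoprime_iff_forall_Icc {r m k : ℕ} (hr : 0 < r) (hk : 0 < k) :
    RCoprime r m k ↔ ∀ d ∈ Icc 2 (k ^ r), ¬(d ^ r ∣ m ∧ d ^ r ∣ k ^ r) := by
  constructor
  · rintro h d hd ⟨hdm, hdk⟩
    have := h d ((Nat.pow_dvd_pow_iff hr.ne').mp hdk) hdm
    grind
  · intro h d hdk hdm
    by_contra hd1
    have hd0 : 0 < d := Nat.pos_of_dvd_of_pos hdk hk
    have hdle : d ≤ k ^ r := (Nat.le_of_dvd hk hdk).trans (Nat.le_self_pow hr.ne' k)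
    exact h d (mem_Icc.mpr ⟨by omega, hdle⟩) ⟨hdm, pow_dvd_pow_of_dvd hdk r⟩

open Classical in
lemma ramcr_eq_sum_rCoprime {r k : ℕ} (n : ℕ) (hr : 0 < r) (hk : 0 < k) :
    ramcr r n k = ∑ m ∈ (Icc 1 (k ^ r)).filter (RCoprime r · k),
      Complex.exp (2 * Real.pi * Complex.I * m * n / (k ^ r)) := by
  rw [ramcr, filter_congr fun m _ => (rCoprime_iff_forall_Icc hr hk).symm]

/-- `lcm d f = f u` with `u ∣ e` and `u^r ∣ m'`, since `lcm (d^r) (f^r) = (lcm d f)^r`. -/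
lemma RCoprime.dvd_of_dvd_mul {r m' e f d : ℕ} (h : RCoprime r m' e) (hf : 0 < f)
    (hd : d ∣ f * e) (hdm : d ^ r ∣ f ^ r * m') : d ∣ f := by
  obtain ⟨u, hu⟩ : f ∣ Nat.lcm d f := Nat.dvd_lcm_right d f
  have hue : u ∣ e := by
    rw [← Nat.mul_dvd_mul_iff_left hf, ← hu]
    exact Nat.lcm_dvd hd (dvd_mul_right f e)
  have hum : u ^ r ∣ m' := by
    rw [← Nat.mul_dvd_mul_iff_left (pow_pos hf r), ← mul_pow, ← hu, ← Nat.pow_lcm_pow]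
    exact Nat.lcm_dvd hdm (dvd_mul_right _ _)
  rw [h u hue hum, mul_one] at hu
  exact hu ▸ Nat.dvd_lcm_left d f

lemma RCoprime.eq_of_pow_mul_eq {r m₁ m₂ e₁ e₂ f₁ f₂ : ℕ} (h₁ : RCoprime r m₁ e₁)
    (h₂ : RCoprime r m₂ e₂) (hf₁ : 0 < f₁) (hf₂ : 0 < f₂) (he : f₁ * e₁ = f₂ * e₂)
    (hm : f₁ ^ r * m₁ = f₂ ^ r * m₂) : f₁ = f₂ ∧ m₁ = m₂ := by
  have hf : f₁ = f₂ := Nat.dvd_antisymm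
    (h₂.dvd_of_dvd_mul hf₂ (he ▸ dvd_mul_right f₁ e₁) (hm ▸ dvd_mul_right _ m₁))
    (h₁.dvd_of_dvd_mul hf₁ (he ▸ dvd_mul_right f₂ e₂) (hm ▸ dvd_mul_right _ m₂))
  subst hf
  exact ⟨rfl, Nat.eq_of_mul_eq_mul_left (pow_pos hf₁ r) hm⟩

lemma exists_eq_pow_mul_rCoprime (r : ℕ) {k : ℕ} (hk : 0 < k) (m : ℕ) :
    ∃ f, f ∣ k ∧ ∃ m', m = f ^ r * m' ∧ RCoprime r m' (k / f) := by
  set f := Nat.findGreatest (fun d => d ∣ k ∧ d ^ r ∣ m) k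
  obtain ⟨hfk, m', hm⟩ : f ∣ k ∧ f ^ r ∣ m :=
    Nat.findGreatest_spec (P := fun d => d ∣ k ∧ d ^ r ∣ m) hk (by simp)
  refine ⟨f, hfk, m', hm, fun d hd hdm => ?_⟩
  have hfd : f * d ∣ k := by simpa [Nat.mul_div_cancel' hfk] using mul_dvd_mul_left f hd
  have hfd_le : f * d ≤ f :=
    Nat.le_findGreatest (Nat.le_of_dvd hk hfd) ⟨hfd, hm ▸ mul_pow f d r ▸ mul_dvd_mul_left _ hdm⟩
  have hf : 0 < f := Nat.pos_of_dvd_of_pos hfk hk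
  have hd0 : 0 < d := Nat.pos_of_dvd_of_pos hd (Nat.div_pos (Nat.le_of_dvd hk hfk) hf)
  nlinarith

lemma sum_Icc_pow_of_pow_eq_one {K : Type*} [DivisionRing K] [DecidableEq K] {z : K} {N : ℕ}
    (hz : z ^ N = 1) :
    ∑ m ∈ Icc 1 N, z ^ m = if z = 1 then (N : K) else 0 := by
  split_ifs with h1
  · simp [h1]
  · have hshift : ∑ m ∈ Icc 1 N, z ^ m = z * ∑ i ∈ range N, z ^ i := by
      rw [← Finset.Ico_add_one_right_eq_Icc, Finset.sum_Ico_eq_sum_range, mul_sum]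
      simp [pow_add]
    rw [hshift, geom_sum_eq h1, hz, sub_self, zero_div, mul_zero]

lemma sum_Icc_exp {N : ℕ} (hN : 0 < N) (n : ℕ) :
    ∑ m ∈ Icc 1 N, Complex.exp (2 * Real.pi * Complex.I * m * n / N)
      = if N ∣ n then (N : ℂ) else 0 := by
  set ζ := Complex.exp (2 * Real.pi * Complex.I / N)
  have hζ : IsPrimitiveRoot ζ N := Complex.isPrimitiveRoot_exp N hN.ne'
  have hterm (m : ℕ) : Complex.exp (2 * Real.pi * Complex.I * m * n / N) = (ζ ^ n) ^ m := by
    rw [← pow_mul, ← Complex.exp_nat_mul]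
    push_cast
    ring_nf
  have hζn : (ζ ^ n) ^ N = 1 := by rw [← pow_mul, mul_comm, pow_mul, hζ.pow_eq_one, one_pow]
  simp only [hterm, sum_Icc_pow_of_pow_eq_one hζn, hζ.pow_eq_one_iff_dvd]

lemma exp_pow_mul_div_pow_mul (r m n f e : ℕ) (hf : 0 < f) :
    Complex.exp (2 * Real.pi * Complex.I * (f ^ r * m : ℕ) * n / ((f * e : ℕ) : ℂ) ^ r)
      = Complex.exp (2 * Real.pi * Complex.I * m * n / (e : ℂ) ^ r) := by
  have hfr : (f : ℂ) ^ r ≠ 0 := pow_ne_zero r (Nat.cast_ne_zero.mpr hf.ne')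
  congr 1
  push_cast
  rw [mul_pow]
  field_simp

lemma pow_mul_mem_Icc_iff {r f e m' : ℕ} (hf : 0 < f) :
    f ^ r * m' ∈ Icc 1 ((f * e) ^ r) ↔ m' ∈ Icc 1 (e ^ r) := by
  have hfr : 0 < f ^ r := pow_pos hf r
  simp only [mem_Icc, mul_pow, Nat.mul_le_mul_left_iff hfr, Nat.one_le_iff_ne_zero,
    mul_ne_zero_iff, hfr.ne', ne_eq, true_and, not_false_eq_true]

open Classical in
lemma sum_divisors_ramcr {r k : ℕ} (n : ℕ) (hr : 0 < r) (hk : 0 < k) :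
    ∑ e ∈ k.divisors, ramcr r n e = if k ^ r ∣ n then (k : ℂ) ^ r else 0 := by
  have hdiv {f : ℕ} (hf : f ∈ k.divisors) : 0 < f ∧ 0 < k / f :=
    ⟨Nat.pos_of_mem_divisors hf, Nat.div_pos (Nat.divisor_le hf) (Nat.pos_of_mem_divisors hf)⟩
  rw [← Nat.sum_div_divisors, sum_congr rfl fun f hf => ramcr_eq_sum_rCoprime n hr (hdiv hf).2,
    sum_sigma', ← Nat.cast_pow, ← sum_Icc_exp (pow_pos hk r)]
  refine sum_bij (fun p _ => p.1 ^ r * p.2) ?_ ?_ ?_ ?_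
  · rintro ⟨f, m'⟩ hp
    simp only [mem_sigma, mem_filter] at hp
    obtain ⟨⟨e, rfl⟩, -⟩ := Nat.mem_divisors.mp hp.1
    rw [Nat.mul_div_cancel_left e (hdiv hp.1).1] at hp
    exact (pow_mul_mem_Icc_iff (hdiv hp.1).1).mpr hp.2.1
  · rintro ⟨f₁, m₁⟩ h₁ ⟨f₂, m₂⟩ h₂ h
    simp only [mem_sigma, mem_filter] at h₁ h₂
    obtain ⟨rfl, rfl⟩ := h₁.2.2.eq_of_pow_mul_eq h₂.2.2 (hdiv h₁.1).1 (hdiv h₂.1).1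
      (by rw [Nat.mul_div_cancel' (Nat.dvd_of_mem_divisors h₁.1),
        Nat.mul_div_cancel' (Nat.dvd_of_mem_divisors h₂.1)]) h
    rfl
  · intro m hm
    obtain ⟨f, ⟨e, rfl⟩, m', rfl, hcop⟩ := exists_eq_pow_mul_rCoprime r hk m
    have hf : 0 < f := Nat.pos_of_mul_pos_right hk
    rw [Nat.mul_div_cancel_left e hf] at hcop
    refine ⟨⟨f, m'⟩, ?_, rfl⟩
    simp only [mem_sigma, mem_filter, Nat.mem_divisors, Nat.mul_div_cancel_left e hf]
    exact ⟨⟨dvd_mul_right f e, hk.ne'⟩, (pow_mul_mem_Icc_iff hf).mp hm, hcop⟩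
  · rintro ⟨f, m'⟩ hp
    obtain ⟨⟨e, rfl⟩, -⟩ := Nat.mem_divisors.mp (mem_sigma.mp hp).1
    have hf : 0 < f := (hdiv (mem_sigma.mp hp).1).1
    simp only [Nat.mul_div_cancel_left e hf, Nat.cast_pow]
    exact (exp_pow_mul_div_pow_mul r m' n f e hf).symm

theorem stmt18_general (r n k : ℕ) (hr : 0 < r) :
    ramcr r n k
      = ∑ d ∈ k.divisors.filter (fun d => d ^ r ∣ n),
          (d : ℂ) ^ r * ((ArithmeticFunction.moebius (k / d) : ℤ) : ℂ) := by
  rcases k.eq_zero_or_pos with rfl | hk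
  · simp [ramcr, hr.ne']
  have inversion := ArithmeticFunction.sum_eq_iff_sum_mul_moebius_eq.mp
    (fun j hj => sum_divisors_ramcr n hr hj) k hk
  rw [← inversion, Nat.sum_divisorsAntidiagonal'
    fun a b => (ArithmeticFunction.moebius a : ℂ) * if b ^ r ∣ n then (b : ℂ) ^ r else 0,
    sum_filter]
  refine sum_congr rfl fun d _ => ?_
  split_ifs <;> simp [mul_comm]

/-- Cohen's Hölder-type evaluation `c_r(n,k) = Σ_{d|k, d^r|n} d^r μ(k/d)`;
in particular `c_r(n,k)` is an integer. -/
theorem stmt18 (r n k : ℕ) (hr : 0 < r) (hn : 0 < n) (hk : 0 < k) :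
    ramcr r n k
      = ∑ d ∈ k.divisors.filter (fun d => d ^ r ∣ n),
          (d : ℂ) ^ r * ((ArithmeticFunction.moebius (k / d) : ℤ) : ℂ) :=
  stmt18_general r n k hr
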